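/- arXiv:1402.0276 — 3 statements merged into one kernel-verified Lean document; each statement's English description precedes it below -/
import Mathlib

section
/- Let A be an irreducible nonnegative d × d matrix and x ∈ [0,∞)^d a nonzero vector with A x ≤ ρ(A) x entrywise. Then A x = ρ(A) x and every entry of x is strictly positive. -/
open scoped Classical

def IsPathFun {V E : Type} (r s : E → V) (n : ℕ) (f : Fin n → E) : Prop :=
  ∀ i : Fin n, ∀ h : i.1 + 1 < n, s (f i) = r (f ⟨i.1 + 1, h⟩)

def Reach {V E : Type} (r s : E → V) : V → V → Prop :=
  Relation.ReflTransGen (fun a b => ∃ e, r e = a ∧ s e = b)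

def Hered {V E : Type} (r s : E → V) (H : Set V) : Prop :=
  ∀ v ∈ H, ∀ w, Reach r s v w → w ∈ H

noncomputable def specRad {ι : Type} [Fintype ι] [DecidableEq ι] (A : Matrix ι ι ℝ) : ℝ :=
  sSup (insert 0 ((fun z : ℂ => ‖z‖) '' spectrum ℂ (A.map Complex.ofReal)))

/-- Irreducibility of a nonnegative matrix: for all i, j some power has positive (i,j) entry. -/
def MatIrred {ι : Type} [Fintype ι] [DecidableEq ι] (B : Matrix ι ι ℝ) : Prop :=
  ∀ i j, ∃ n : ℕ, 0 < (B ^ n) i j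


/-!
Write `ρ = specRad A`. Every eigenvector `v` of `A` satisfies `|z| |v| ≤ A |v|` entrywise, so
comparing `|v|` with a strictly positive vector `y` at the index where `|v j| / y j` is largest
shows `|z| ≤ c` whenever `A y ≤ c y`; hence `ρ ≤ c`, and `ρ < c` if `A y < c y` everywhere.

Positivity: `A x ≤ ρ x` iterates to `Aⁿ x ≤ ρⁿ x`, and irreducibility makes some `(Aⁿ x) i`
positive for every `i`.

Equality: for large `N` the matrix `P = ∑_{k ≤ N} Aᵏ` is entrywise positive and commutes with `A`.
If `y = ρ x - A x ≥ 0` were nonzero, then `w = P x` would be strictly positive with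
`A w = ρ w - P y < ρ w` entrywise, forcing `ρ < ρ`.
-/

namespace Matrix

variable {ι : Type} [Fintype ι]

lemma mul_le_mulVec_apply {A : Matrix ι ι ℝ} {x : ι → ℝ} (hA : ∀ i j, 0 ≤ A i j)
    (hx : ∀ i, 0 ≤ x i) (i j : ι) : A i j * x j ≤ (A *ᵥ x) i :=
  Finset.single_le_sum (f := fun j => A i j * x j) (fun j _ => mul_nonneg (hA i j) (hx j))
    (Finset.mem_univ j)

lemma mulVec_apply_nonneg {A : Matrix ι ι ℝ} {x : ι → ℝ} (hA : ∀ i j, 0 ≤ A i j)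
    (hx : ∀ i, 0 ≤ x i) (i : ι) : 0 ≤ (A *ᵥ x) i :=
  Finset.sum_nonneg fun j _ => mul_nonneg (hA i j) (hx j)

lemma mulVec_apply_mono {A : Matrix ι ι ℝ} {x y : ι → ℝ} (hA : ∀ i j, 0 ≤ A i j)
    (hxy : ∀ i, x i ≤ y i) (i : ι) : (A *ᵥ x) i ≤ (A *ᵥ y) i :=
  Finset.sum_le_sum fun j _ => mul_le_mul_of_nonneg_left (hxy j) (hA i j)

lemma mulVec_apply_pos {P : Matrix ι ι ℝ} {y : ι → ℝ} (hP : ∀ i j, 0 < P i j)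
    (hy : ∀ i, 0 ≤ y i) (hy0 : y ≠ 0) (i : ι) : 0 < (P *ᵥ y) i := by
  obtain ⟨j, hj⟩ := Function.ne_iff.mp hy0
  calc 0 < P i j * y j := mul_pos (hP i j) ((hy j).lt_of_ne' hj)
    _ ≤ (P *ᵥ y) i := mul_le_mulVec_apply (fun i j => (hP i j).le) hy i j

lemma norm_mulVec_apply_le {A : Matrix ι ι ℝ} (hA : ∀ i j, 0 ≤ A i j) (v : ι → ℂ) (i : ι) :
    ‖(A.map Complex.ofReal *ᵥ v) i‖ ≤ (A *ᵥ fun j => ‖v j‖) i := by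
  refine (norm_sum_le _ _).trans_eq (Finset.sum_congr rfl fun j _ => ?_)
  simp only [map_apply, norm_mul, Complex.norm_real, Real.norm_of_nonneg (hA i j)]

variable [DecidableEq ι]

lemma pow_mulVec_le_of_mulVec_le {A : Matrix ι ι ℝ} {x : ι → ℝ} {r : ℝ}
    (hA : ∀ i j, 0 ≤ A i j) (hr : 0 ≤ r) (h : ∀ i, (A *ᵥ x) i ≤ r * x i) (n : ℕ) (i : ι) :
    (A ^ n *ᵥ x) i ≤ r ^ n * x i := by
  induction n generalizing i with
  | zero => simp
  | succ n ih =>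
    calc (A ^ (n + 1) *ᵥ x) i = (A ^ n *ᵥ (A *ᵥ x)) i := by rw [pow_succ, mulVec_mulVec]
      _ ≤ (A ^ n *ᵥ (r • x)) i := mulVec_apply_mono (pow_apply_nonneg hA n) h i
      _ = r * (A ^ n *ᵥ x) i := by rw [mulVec_smul, Pi.smul_apply, smul_eq_mul]
      _ ≤ r * (r ^ n * x i) := mul_le_mul_of_nonneg_left (ih i) hr
      _ = r ^ (n + 1) * x i := by ring

lemma pos_of_mulVec_le {A : Matrix ι ι ℝ} {x : ι → ℝ} {r : ℝ} (hA : ∀ i j, 0 ≤ A i j)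
    (hirr : MatIrred A) (hx : ∀ i, 0 ≤ x i) (hx0 : x ≠ 0) (hr : 0 ≤ r)
    (h : ∀ i, (A *ᵥ x) i ≤ r * x i) (i : ι) : 0 < x i := by
  obtain ⟨j, hj⟩ := Function.ne_iff.mp hx0
  obtain ⟨n, hn⟩ := hirr i j
  have : 0 < r ^ n * x i :=
    calc 0 < (A ^ n) i j * x j := mul_pos hn ((hx j).lt_of_ne' hj)
      _ ≤ (A ^ n *ᵥ x) i := mul_le_mulVec_apply (pow_apply_nonneg hA n) hx i j
      _ ≤ r ^ n * x i := pow_mulVec_le_of_mulVec_le hA hr h n i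
  exact pos_of_mul_pos_right this (pow_nonneg hr n)

lemma exists_sum_pow_pos {A : Matrix ι ι ℝ} (hA : ∀ i j, 0 ≤ A i j) (hirr : MatIrred A) :
    ∃ N, ∀ i j, 0 < (∑ k ∈ Finset.range (N + 1), A ^ k) i j := by
  choose n hn using hirr
  refine ⟨Finset.univ.sup fun p : ι × ι => n p.1 p.2, fun i j => ?_⟩
  have hle : n i j ≤ Finset.univ.sup fun p : ι × ι => n p.1 p.2 :=
    Finset.le_sup (f := fun p : ι × ι => n p.1 p.2) (Finset.mem_univ (i, j))
  rw [sum_apply]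
  exact (hn i j).trans_le <| Finset.single_le_sum (f := fun k => (A ^ k) i j)
    (fun k _ => pow_apply_nonneg hA k i j) (Finset.mem_range.mpr (Nat.lt_succ_of_le hle))

lemma norm_le_of_mem_spectrum {A : Matrix ι ι ℝ} {y : ι → ℝ} {c : ℝ} {z : ℂ}
    (hA : ∀ i j, 0 ≤ A i j) (hy : ∀ i, 0 < y i) (hc : ∀ i, (A *ᵥ y) i ≤ c * y i)
    (hz : z ∈ spectrum ℂ (A.map Complex.ofReal)) : ‖z‖ ≤ c := by
  rw [← spectrum_toLin', ← Module.End.hasEigenvalue_iff_mem_spectrum] at hz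
  obtain ⟨v, hv⟩ := hz.exists_hasEigenvector
  have hAv : A.map Complex.ofReal *ᵥ v = z • v := by
    simpa only [toLin'_apply] using hv.apply_eq_smul
  obtain ⟨k, hk⟩ := Function.ne_iff.mp hv.2
  obtain ⟨i, -, hi⟩ := Finset.univ.exists_max_image (fun j => ‖v j‖ / y j) ⟨k, Finset.mem_univ k⟩
  set t := ‖v i‖ / y i
  have ht : 0 < t := (div_pos (norm_pos_iff.mpr hk) (hy k)).trans_le (hi k (Finset.mem_univ k))
  have hvt : ∀ j, ‖v j‖ ≤ t * y j := fun j =>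
    (div_le_iff₀ (hy j)).mp (hi j (Finset.mem_univ j))
  have hvi : ‖v i‖ = t * y i := (div_mul_cancel₀ _ (hy i).ne').symm
  have key : ‖z‖ * (t * y i) ≤ c * (t * y i) :=
    calc ‖z‖ * (t * y i) = ‖(A.map Complex.ofReal *ᵥ v) i‖ := by
          rw [hAv, Pi.smul_apply, smul_eq_mul, norm_mul, hvi]
      _ ≤ (A *ᵥ fun j => ‖v j‖) i := norm_mulVec_apply_le hA v i
      _ ≤ (A *ᵥ (t • y)) i := mulVec_apply_mono hA hvt i
      _ = t * (A *ᵥ y) i := by rw [mulVec_smul, Pi.smul_apply, smul_eq_mul]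
      _ ≤ t * (c * y i) := mul_le_mul_of_nonneg_left (hc i) ht.le
      _ = c * (t * y i) := by ring
  exact le_of_mul_le_mul_right key (mul_pos ht (hy i))

lemma specRad_nonneg (A : Matrix ι ι ℝ) : 0 ≤ specRad A :=
  Real.sSup_nonneg <| by rintro r (rfl | ⟨z, -, rfl⟩) <;> positivity

lemma specRad_le_of_mulVec_le {A : Matrix ι ι ℝ} {y : ι → ℝ} {c : ℝ} (hA : ∀ i j, 0 ≤ A i j)
    (hy : ∀ i, 0 < y i) (hc0 : 0 ≤ c) (hc : ∀ i, (A *ᵥ y) i ≤ c * y i) : specRad A ≤ c := by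
  refine Real.sSup_le ?_ hc0
  rintro r (rfl | ⟨z, hz, rfl⟩)
  · exact hc0
  · exact norm_le_of_mem_spectrum hA hy hc hz

lemma specRad_lt_of_mulVec_lt [Nonempty ι] {A : Matrix ι ι ℝ} {y : ι → ℝ} {c : ℝ}
    (hA : ∀ i j, 0 ≤ A i j) (hy : ∀ i, 0 < y i) (hc : ∀ i, (A *ᵥ y) i < c * y i) :
    specRad A < c := by
  set c' := Finset.univ.sup' (Finset.univ_nonempty (α := ι)) fun i => (A *ᵥ y) i / y i
  obtain ⟨i⟩ := ‹Nonempty ι›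
  have hc'0 : 0 ≤ c' := Finset.le_sup'_of_le _ (Finset.mem_univ i) <|
    div_nonneg (mulVec_apply_nonneg hA (fun j => (hy j).le) i) (hy i).le
  have hc' : ∀ i, (A *ᵥ y) i ≤ c' * y i := fun i =>
    (div_le_iff₀ (hy i)).mp (Finset.le_sup' (fun i => (A *ᵥ y) i / y i) (Finset.mem_univ i))
  have hc'c : c' < c := (Finset.sup'_lt_iff _).mpr fun i _ => (div_lt_iff₀ (hy i)).mpr (hc i)
  exact (specRad_le_of_mulVec_le hA hy hc'0 hc').trans_lt hc'c

lemma mulVec_eq_specRad_smul_of_le {A : Matrix ι ι ℝ} {x : ι → ℝ} (hA : ∀ i j, 0 ≤ A i j)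
    (hirr : MatIrred A) (hx : ∀ i, 0 ≤ x i) (hx0 : x ≠ 0)
    (hsub : ∀ i, (A *ᵥ x) i ≤ specRad A * x i) : A *ᵥ x = specRad A • x := by
  set ρ := specRad A
  by_contra hne
  set y := ρ • x - A *ᵥ x
  have hy : ∀ i, 0 ≤ y i := fun i => sub_nonneg.mpr (hsub i)
  have hy0 : y ≠ 0 := sub_ne_zero.mpr (Ne.symm hne)
  obtain ⟨N, hP⟩ := exists_sum_pow_pos hA hirr
  set P := ∑ k ∈ Finset.range (N + 1), A ^ k
  have hAP : A * P = P * A := by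
    simp only [P, Finset.mul_sum, Finset.sum_mul, ← pow_succ, ← pow_succ']
  have hw : A *ᵥ (P *ᵥ x) = ρ • (P *ᵥ x) - P *ᵥ y := by
    rw [mulVec_mulVec, hAP, ← mulVec_mulVec, mulVec_sub, mulVec_smul, sub_sub_cancel]
  have : Nonempty ι := ⟨(Function.ne_iff.mp hx0).choose⟩
  refine lt_irrefl ρ (specRad_lt_of_mulVec_lt hA (mulVec_apply_pos hP hx hx0) fun i => ?_)
  rw [hw, Pi.sub_apply, Pi.smul_apply, smul_eq_mul, sub_lt_self_iff]
  exact mulVec_apply_pos hP hy hy0 i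

end Matrix

/-- Seneta's subinvariance theorem: if A is irreducible nonnegative, x ≥ 0 nonzero and
A x ≤ ρ(A) x entrywise, then A x = ρ(A) x and x is strictly positive. -/
theorem stmt9 {d : ℕ} (A : Matrix (Fin d) (Fin d) ℝ) (hA : ∀ i j, 0 ≤ A i j)
    (hirr : MatIrred A) (x : Fin d → ℝ) (hx : ∀ i, 0 ≤ x i) (hx0 : x ≠ 0)
    (hsub : ∀ i, A.mulVec x i ≤ specRad A * x i) :
    A.mulVec x = specRad A • x ∧ ∀ i, 0 < x i :=
  ⟨Matrix.mulVec_eq_specRad_smul_of_le hA hirr hx hx0 hsub,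
    Matrix.pos_of_mulVec_le hA hirr hx hx0 (Matrix.specRad_nonneg A) hsub⟩
end

section
/- Let E be a finite directed graph with vertex matrix A and suppose E has at least one cycle. Let K be the union of the minimal critical components (components C with ρ(A_C) = ρ(A), minimal among such), and H the hereditary closure of K. Then ρ(A_{E^0∖H}) < ρ(A). -/
open scoped Classical

noncomputable def subRad {V : Type} [Fintype V] [DecidableEq V]
    (A : Matrix V V ℝ) (C : Set V) : ℝ :=
  specRad (A.submatrix (Subtype.val : ↥C → V) Subtype.val)

def IsSCC {V E : Type} (r s : E → V) (C : Set V) : Prop :=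
  ∃ v, C = {w | Reach r s v w ∧ Reach r s w v}

def IsCrit {V E : Type} [Fintype V] [DecidableEq V] (r s : E → V)
    (A : Matrix V V ℝ) (C : Set V) : Prop :=
  IsSCC r s C ∧ subRad A C = specRad A

/-- C is minimal among critical components for the order D ≤ C iff DE*C ≠ ∅. -/
def IsMinCrit {V E : Type} [Fintype V] [DecidableEq V] (r s : E → V)
    (A : Matrix V V ℝ) (C : Set V) : Prop :=
  IsCrit r s A C ∧
    ∀ D : Set V, IsCrit r s A D → (∃ d ∈ D, ∃ c ∈ C, Reach r s d c) → D = C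


/-!
Order the strongly connected components by a linear extension of reachability, namely the colex
order of their (common) sets of ancestors. Since `A v w ≠ 0` only along an edge, `A` is then
block triangular with the components as diagonal blocks, so the spectrum of the principal
submatrix on any union of components is the union of the spectra of those components.

Hence `ρ(A_{E⁰∖H})` is `0` or `ρ(A_C)` for a component `C` outside `H`, and such a `C` has
`ρ(A_C) < ρ(A)`: otherwise `C` is critical, the critical component with the fewest ancestors
among those reaching `C` is minimal critical, and `C` lies in `H`. Finally `ρ(A) > 0`, because a
cycle through `v` makes `(A ^ n) v v > 0` for infinitely many `n`, so `A` is not nilpotent,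
whereas a complex matrix with spectrum `{0}` is.
-/

open Polynomial

section SpectralRadius

variable {ι κ : Type} [Fintype ι] [DecidableEq ι] [Fintype κ] [DecidableEq κ]

lemma specRad_set_finite (A : Matrix ι ι ℝ) :
    (insert 0 ((fun z : ℂ => ‖z‖) '' spectrum ℂ (A.map Complex.ofReal))).Finite :=
  ((A.map Complex.ofReal).finite_spectrum.image _).insert 0

lemma specRad_nonneg (A : Matrix ι ι ℝ) : 0 ≤ specRad A :=
  le_csSup (specRad_set_finite A).bddAbove (Set.mem_insert _ _)

lemma norm_le_specRad (A : Matrix ι ι ℝ) {μ : ℂ}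
    (hμ : μ ∈ spectrum ℂ (A.map Complex.ofReal)) : ‖μ‖ ≤ specRad A :=
  le_csSup (specRad_set_finite A).bddAbove (Set.mem_insert_of_mem _ ⟨μ, hμ, rfl⟩)

lemma specRad_eq_zero_or_exists_norm_eq (A : Matrix ι ι ℝ) :
    specRad A = 0 ∨ ∃ μ ∈ spectrum ℂ (A.map Complex.ofReal), ‖μ‖ = specRad A :=
  Set.Nonempty.csSup_mem ⟨0, Set.mem_insert _ _⟩ (specRad_set_finite A)

lemma specRad_le_of_spectrum_subset {A : Matrix ι ι ℝ} {B : Matrix κ κ ℝ}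
    (h : spectrum ℂ (A.map Complex.ofReal) ⊆ spectrum ℂ (B.map Complex.ofReal)) :
    specRad A ≤ specRad B :=
  csSup_le_csSup (specRad_set_finite B).bddAbove ⟨0, Set.mem_insert _ _⟩
    (Set.insert_subset_insert (Set.image_mono h))

lemma specRad_submatrix_equiv (A : Matrix ι ι ℝ) (e : κ ≃ ι) :
    specRad (A.submatrix e e) = specRad A := by
  have : (A.submatrix e e).map Complex.ofReal =
      Matrix.reindexAlgEquiv ℂ ℂ e.symm (A.map Complex.ofReal) := by
    ext
    simp [Matrix.coe_reindexAlgEquiv]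
  rw [specRad, specRad, this, AlgEquiv.spectrum_eq]

lemma Matrix.isNilpotent_of_spectrum_subset_zero {K : Type} [Field K] [IsAlgClosed K]
    {M : Matrix ι ι K} (h : spectrum K M ⊆ {0}) : IsNilpotent M := by
  have hsplits : M.charpoly.Splits := IsAlgClosed.splits _
  have hroots : M.charpoly.roots = Multiset.replicate (Fintype.card ι) 0 :=
    Multiset.eq_replicate.mpr
      ⟨by rw [← hsplits.natDegree_eq_card_roots, M.charpoly_natDegree_eq_dim],
        fun μ hμ => h (M.mem_spectrum_iff_isRoot_charpoly.mpr (isRoot_of_mem_roots hμ))⟩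
  have hX : M.charpoly = X ^ Fintype.card ι := by
    rw [hsplits.eq_prod_roots_of_monic M.charpoly_monic, hroots]
    simp
  exact ⟨Fintype.card ι, by simpa [hX] using M.aeval_self_charpoly⟩

lemma isNilpotent_of_specRad_eq_zero {A : Matrix ι ι ℝ} (h : specRad A = 0) :
    IsNilpotent A := by
  have : IsNilpotent (Complex.ofRealHom.mapMatrix A) :=
    Matrix.isNilpotent_of_spectrum_subset_zero fun μ hμ =>
      norm_le_zero_iff.mp (h ▸ norm_le_specRad A hμ)
  exact (IsNilpotent.map_iff (Matrix.map_injective Complex.ofReal_injective)).mp this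

end SpectralRadius

section Nonneg

variable {ι R : Type*} [Fintype ι] [DecidableEq ι] [Semiring R] [PartialOrder R]
  [IsStrictOrderedRing R] {A : Matrix ι ι R}

lemma Matrix.exists_pow_apply_pos_of_transGen (hA : ∀ i j, 0 ≤ A i j) {i j : ι}
    (h : Relation.TransGen (fun i j => 0 < A i j) i j) : ∃ k, 0 < k ∧ 0 < (A ^ k) i j := by
  induction h with
  | single h => exact ⟨1, one_pos, by simpa using h⟩
  | @tail b c _ hbc ih =>
    obtain ⟨k, -, hk⟩ := ih
    refine ⟨k + 1, k.succ_pos, ?_⟩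
    rw [pow_succ, Matrix.mul_apply]
    exact Finset.sum_pos' (fun u _ => mul_nonneg (Matrix.pow_apply_nonneg hA k i u) (hA u c))
      ⟨b, Finset.mem_univ b, mul_pos hk hbc⟩

lemma Matrix.diag_pow_le_pow_apply (hA : ∀ i j, 0 ≤ A i j) (i : ι) (m : ℕ) :
    A i i ^ m ≤ (A ^ m) i i := by
  induction m with
  | zero => simp
  | succ m ih =>
    rw [pow_succ, pow_succ, Matrix.mul_apply]
    calc A i i ^ m * A i i ≤ (A ^ m) i i * A i i := mul_le_mul_of_nonneg_right ih (hA i i)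
      _ ≤ ∑ u, (A ^ m) i u * A u i :=
        Finset.single_le_sum (f := fun u => (A ^ m) i u * A u i)
          (fun u _ => mul_nonneg (Matrix.pow_apply_nonneg hA m i u) (hA u i)) (Finset.mem_univ i)

lemma Matrix.not_isNilpotent_of_transGen_self (hA : ∀ i j, 0 ≤ A i j) {i : ι}
    (h : Relation.TransGen (fun i j => 0 < A i j) i i) : ¬IsNilpotent A := by
  rintro ⟨N, hN⟩
  obtain ⟨k, hk, hpos⟩ := Matrix.exists_pow_apply_pos_of_transGen hA h
  have : 0 < ((A ^ k) ^ N) i i :=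
    (pow_pos hpos N).trans_le (Matrix.diag_pow_le_pow_apply (Matrix.pow_apply_nonneg hA k) i N)
  rw [← pow_mul, pow_eq_zero_of_le (Nat.le_mul_of_pos_left N hk) hN] at this
  exact this.ne' rfl

end Nonneg

section BlockTriangular

variable {ι α : Type} [Fintype ι] [DecidableEq ι] [LinearOrder α] {b : ι → α}

lemma Matrix.BlockTriangular.spectrum_eq_iUnion {K : Type} [Field K] {M : Matrix ι ι K}
    (hM : M.BlockTriangular b) : spectrum K M = ⋃ i, spectrum K (M.toSquareBlock b (b i)) := by
  ext μ
  simp only [Set.mem_iUnion, Matrix.mem_spectrum_iff_isRoot_charpoly, IsRoot, hM.charpoly,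
    eval_prod, Finset.prod_eq_zero_iff, Finset.mem_image, Finset.mem_univ, true_and]
  exact ⟨fun ⟨_, ⟨i, rfl⟩, hi⟩ => ⟨i, hi⟩,
    fun ⟨i, hi⟩ => ⟨b i, ⟨i, rfl⟩, hi⟩⟩

lemma specRad_toSquareBlock_le {A : Matrix ι ι ℝ} (hA : A.BlockTriangular b) (i : ι) :
    specRad (A.toSquareBlock b (b i)) ≤ specRad A := by
  have hB : (A.map Complex.ofReal).BlockTriangular b := hA.map Complex.ofRealHom
  exact specRad_le_of_spectrum_subset <|
    hB.spectrum_eq_iUnion ▸ Set.subset_iUnion_of_subset i le_rfl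

lemma specRad_lt_of_forall_toSquareBlock_lt {A : Matrix ι ι ℝ} (hA : A.BlockTriangular b)
    {c : ℝ} (hc : 0 < c) (h : ∀ i, specRad (A.toSquareBlock b (b i)) < c) : specRad A < c := by
  rcases specRad_eq_zero_or_exists_norm_eq A with h0 | ⟨μ, hμ, hμA⟩
  · rwa [h0]
  · have hB : (A.map Complex.ofReal).BlockTriangular b := hA.map Complex.ofRealHom
    rw [hB.spectrum_eq_iUnion, Set.mem_iUnion] at hμ
    obtain ⟨i, hi⟩ := hμ
    exact hμA ▸ (norm_le_specRad _ hi).trans_lt (h i)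

end BlockTriangular

section Submatrix

variable {V ι α : Type} [Fintype V] [DecidableEq V] [Fintype ι] [DecidableEq ι]

lemma subRad_range (A : Matrix V V ℝ) {f : ι → V} (hf : Function.Injective f) :
    subRad A (Set.range f) = specRad (A.submatrix f f) := by
  rw [subRad]
  convert (specRad_submatrix_equiv (A.submatrix Subtype.val Subtype.val)
    (Equiv.ofInjective f hf)).symm
  rfl

variable [LinearOrder α] {b : V → α} {A : Matrix V V ℝ}

lemma subRad_fiber_le (hA : A.BlockTriangular b) (v : V) :
    subRad A {w | b w = b v} ≤ specRad A := by
  rw [← Subtype.range_coe_subtype, subRad_range A Subtype.val_injective]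
  exact specRad_toSquareBlock_le hA v

lemma subRad_lt_of_forall_fiber_lt (hA : A.BlockTriangular b) {S : Set V}
    (hS : ∀ v ∈ S, ∀ w, b w = b v → w ∈ S) {c : ℝ} (hc : 0 < c)
    (h : ∀ v ∈ S, subRad A {w | b w = b v} < c) : subRad A S < c := by
  refine specRad_lt_of_forall_toSquareBlock_lt (hA.submatrix (f := Subtype.val)) hc fun v => ?_
  let f : {w : S // b w = b v} → V := Subtype.val ∘ Subtype.val
  have hfiber : Set.range f = {w | b w = b v} := by
    ext w
    exact ⟨by rintro ⟨w, rfl⟩; exact w.2,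
      fun hw => ⟨⟨⟨w, hS v v.2 w hw⟩, hw⟩, rfl⟩⟩
  calc _ = specRad (A.submatrix f f) := rfl
    _ = subRad A {w | b w = b v} := by
      rw [← hfiber, subRad_range A (Subtype.val_injective.comp Subtype.val_injective)]
    _ < c := h v v.2

end Submatrix

section Graph

variable {V E : Type} {r s : E → V}

def scc (r s : E → V) (v : V) : Set V := {w | Reach r s v w ∧ Reach r s w v}

lemma mem_scc_self (v : V) : v ∈ scc r s v := ⟨.refl, .refl⟩

lemma scc_eq_of_mem {v w : V} (h : w ∈ scc r s v) : scc r s w = scc r s v := by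
  ext u
  exact ⟨fun ⟨hwu, huw⟩ => ⟨h.1.trans hwu, huw.trans h.2⟩,
    fun ⟨hvu, huv⟩ => ⟨h.2.trans hvu, huv.trans h.1⟩⟩

lemma pos_iff_exists_edge [Finite E] {A : Matrix V V ℝ}
    (hA : ∀ v w, A v w = Nat.card {e : E // r e = v ∧ s e = w}) {v w : V} :
    0 < A v w ↔ ∃ e, r e = v ∧ s e = w := by
  rw [hA, Nat.cast_pos, Nat.card_pos_iff, and_iff_left Subtype.finite, nonempty_subtype]

variable [Fintype V]

noncomputable def ancestorRank (r s : E → V) (v : V) : Colex (Finset (Fin (Fintype.card V))) :=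
  toColex ((Finset.univ.filter (Reach r s · v)).map (Fintype.equivFin V).toEmbedding)

lemma ancestorRank_le_of_reach {v w : V} (h : Reach r s v w) :
    ancestorRank r s v ≤ ancestorRank r s w :=
  Finset.Colex.toColex_le_toColex_of_subset <| Finset.map_subset_map.mpr fun u hu => by
    simp only [Finset.mem_filter, Finset.mem_univ, true_and] at hu ⊢
    exact hu.trans h

lemma ancestorRank_eq_iff {v w : V} :
    ancestorRank r s w = ancestorRank r s v ↔ w ∈ scc r s v := by
  rw [ancestorRank, ancestorRank, toColex_inj, Finset.map_inj]
  simp only [Finset.ext_iff, Finset.mem_filter, Finset.mem_univ, true_and]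
  exact ⟨fun h => ⟨(h v).mpr .refl, (h w).mp .refl⟩,
    fun h u => ⟨fun huw => huw.trans h.2, fun huv => huv.trans h.1⟩⟩

lemma setOf_ancestorRank_eq (v : V) : {w | ancestorRank r s w = ancestorRank r s v} = scc r s v :=
  Set.ext fun _ => ancestorRank_eq_iff

lemma blockTriangular_ancestorRank [Finite E] {A : Matrix V V ℝ}
    (hA : ∀ v w, A v w = Nat.card {e : E // r e = v ∧ s e = w}) :
    A.BlockTriangular (ancestorRank r s) := by
  intro v w hlt
  by_contra hne
  have hpos : 0 < A v w := (hA v w ▸ Nat.cast_nonneg _ : 0 ≤ A v w).lt_of_ne' hne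
  exact hlt.not_ge (ancestorRank_le_of_reach (.single ((pos_iff_exists_edge hA).mp hpos)))

variable [DecidableEq V] {A : Matrix V V ℝ}

lemma exists_isMinCrit_reach {v : V} (hv : IsCrit r s A (scc r s v)) :
    ∃ C, IsMinCrit r s A C ∧ ∃ u ∈ C, Reach r s u v := by
  obtain ⟨m, ⟨hm, hmv⟩, hmin⟩ := Set.exists_min_image
    {u | IsCrit r s A (scc r s u) ∧ Reach r s u v} (ancestorRank r s) (Set.toFinite _)
    ⟨v, hv, .refl⟩
  refine ⟨scc r s m, ⟨hm, ?_⟩, m, mem_scc_self m, hmv⟩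
  rintro D hD ⟨d, hd, c, hc, hdc⟩
  obtain ⟨u, rfl⟩ := hD.1
  have hum : Reach r s u m := hd.1.trans (hdc.trans hc.2)
  have hrank : ancestorRank r s m = ancestorRank r s u :=
    le_antisymm (hmin u ⟨hD, hum.trans hmv⟩) (ancestorRank_le_of_reach hum)
  exact (scc_eq_of_mem (ancestorRank_eq_iff.mp hrank)).symm

lemma specRad_pos_of_cycle [Finite E]
    (hA : ∀ v w, A v w = Nat.card {e : E // r e = v ∧ s e = w})
    (hcyc : ∃ e : E, Reach r s (s e) (r e)) : 0 < specRad A := by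
  obtain ⟨e, he⟩ := hcyc
  have hnonneg : ∀ v w, 0 ≤ A v w := fun v w => hA v w ▸ Nat.cast_nonneg _
  have hcycle : Relation.TransGen (fun v w => 0 < A v w) (r e) (r e) :=
    .head' ((pos_iff_exists_edge hA).mpr ⟨e, rfl, rfl⟩)
      (Relation.ReflTransGen.mono (fun v w hvw => (pos_iff_exists_edge hA).mpr hvw) _ _ he)
  exact (specRad_nonneg A).lt_of_ne' fun h0 =>
    Matrix.not_isNilpotent_of_transGen_self hnonneg hcycle (isNilpotent_of_specRad_eq_zero h0)

end Graph

/-- If E has a cycle, K is the union of the minimal critical components and H is its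
hereditary closure, then ρ(A_{E⁰∖H}) < ρ(A). -/
theorem stmt12 {V E : Type} [Fintype V] [Fintype E] [DecidableEq V] (r s : E → V)
    (A : Matrix V V ℝ)
    (hA : ∀ v w, A v w = Nat.card {e : E // r e = v ∧ s e = w})
    (hcyc : ∃ e : E, Reach r s (s e) (r e))
    (K : Set V) (hK : K = {v | ∃ C : Set V, IsMinCrit r s A C ∧ v ∈ C})
    (H : Set V) (hHdef : H = {w | ∃ v ∈ K, Reach r s v w}) :
    subRad A Hᶜ < specRad A := by
  have hblock := blockTriangular_ancestorRank hA
  have hH : Hered r s H := by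
    rintro v hv w hvw
    rw [hHdef] at hv ⊢
    obtain ⟨k, hk, hkv⟩ := hv
    exact ⟨k, hk, hkv.trans hvw⟩
  refine subRad_lt_of_forall_fiber_lt hblock ?_ (specRad_pos_of_cycle hA hcyc) fun v hv => ?_
  · exact fun v hv w hw hwH => hv (hH w hwH v (ancestorRank_eq_iff.mp hw).2)
  · have hle := subRad_fiber_le hblock v
    rw [setOf_ancestorRank_eq] at hle ⊢
    refine hle.lt_of_ne fun hcrit => hv ?_
    obtain ⟨C, hC, u, hu, huv⟩ := exists_isMinCrit_reach ⟨⟨v, rfl⟩, hcrit⟩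
    rw [hHdef, hK]
    exact ⟨u, ⟨C, hC, hu⟩, huv⟩
end

section
/- Let E be a finite directed graph, K the union of the minimal critical components of E, and QE(K) the set of paths μe where e is an edge with s(e) ∈ K, r(e) ∉ K, and μ is any path (possibly of length 0) with s(μ) = r(e) and all vertices of μ outside the hereditary closure H of K. Then the paths in QE(K) are pairwise incomparable: no element of QE(K) is a proper extension of another, i.e., for distinct λ, λ' ∈ QE(K), neither λ = λ'λ'' nor λ' = λλ'' for any path λ''. -/
/-! Along a quick-exit path only the source of the last edge lies in `K`: every earlier
source is the range of the next edge, which lies outside `H ⊇ K` or is the range of the last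
edge, outside `K`. A proper prefix of such a path would end with an edge whose source is in `K`. -/

open scoped Classical

/-- Paths μe making a quick exit from K: the last edge has source in K and range
outside K, and all earlier vertices of the path lie outside H. -/
def QEset {V E : Type} (r s : E → V) (K H : Set V) : Set (Σ n : ℕ, Fin n → E) :=
  {p | IsPathFun r s p.1 p.2 ∧ ∃ h : 0 < p.1,
    s (p.2 ⟨p.1 - 1, Nat.sub_lt h one_pos⟩) ∈ K ∧
    r (p.2 ⟨p.1 - 1, Nat.sub_lt h one_pos⟩) ∉ K ∧
    ∀ i : Fin p.1, i.1 + 1 < p.1 → r (p.2 i) ∉ H}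

theorem QEset.source_notMem {V E : Type} {r s : E → V} {K H : Set V} (hKH : K ⊆ H)
    {p : Σ n : ℕ, Fin n → E} (hp : p ∈ QEset r s K H) (i : Fin p.1) (hi : i.1 + 1 < p.1) :
    s (p.2 i) ∉ K := by
  obtain ⟨hpath, h0, -, hlast, hinner⟩ := hp
  rw [hpath i hi]
  rcases lt_or_ge (i.1 + 1 + 1) p.1 with hlt | hge
  · exact fun hK => hinner _ hlt (hKH hK)
  · have hlast_idx : (⟨i.1 + 1, hi⟩ : Fin p.1) = ⟨p.1 - 1, by omega⟩ :=
      Fin.ext (show i.1 + 1 = p.1 - 1 by omega)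
    rwa [hlast_idx]

theorem QEset.not_proper_prefix {V E : Type} {r s : E → V} {K H : Set V} (hKH : K ⊆ H)
    {p q : Σ n : ℕ, Fin n → E} (hp : p ∈ QEset r s K H) (hq : q ∈ QEset r s K H)
    (hlt : p.1 < q.1) (hprefix : ∀ i : Fin p.1, p.2 i = q.2 ⟨i.1, i.isLt.trans hlt⟩) :
    False := by
  obtain ⟨-, h0, hsrc, -⟩ := hp
  refine QEset.source_notMem hKH hq ⟨p.1 - 1, by omega⟩ (show p.1 - 1 + 1 < q.1 by omega) ?_
  rwa [← hprefix ⟨p.1 - 1, by omega⟩]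

theorem stmt13_general {V E : Type} (r s : E → V)
    (K : Set V)
    (H : Set V) (hHdef : H = {w | ∃ v ∈ K, Reach r s v w})
    (p q : Σ n : ℕ, Fin n → E) (hp : p ∈ QEset r s K H) (hq : q ∈ QEset r s K H) :
    (¬ ∃ hlt : p.1 < q.1, ∀ i : Fin p.1, p.2 i = q.2 ⟨i.1, Nat.lt_trans i.isLt hlt⟩) ∧
    (¬ ∃ hlt : q.1 < p.1, ∀ i : Fin q.1, q.2 i = p.2 ⟨i.1, Nat.lt_trans i.isLt hlt⟩) := by
  have hKH : K ⊆ H := hHdef ▸ fun v hv => ⟨v, hv, .refl⟩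
  exact ⟨fun ⟨hlt, hprefix⟩ => QEset.not_proper_prefix hKH hp hq hlt hprefix,
    fun ⟨hlt, hprefix⟩ => QEset.not_proper_prefix hKH hq hp hlt hprefix⟩

/-- Distinct quick-exit paths are incomparable: neither is a proper extension of the other. -/
theorem stmt13 {V E : Type} [Fintype V] [Fintype E] [DecidableEq V] (r s : E → V)
    (A : Matrix V V ℝ)
    (hA : ∀ v w, A v w = Nat.card {e : E // r e = v ∧ s e = w})
    (K : Set V) (hK : K = {v | ∃ C : Set V, IsMinCrit r s A C ∧ v ∈ C})
    (H : Set V) (hHdef : H = {w | ∃ v ∈ K, Reach r s v w})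
    (p q : Σ n : ℕ, Fin n → E) (hp : p ∈ QEset r s K H) (hq : q ∈ QEset r s K H)
    (hne : p ≠ q) :
    (¬ ∃ hlt : p.1 < q.1, ∀ i : Fin p.1, p.2 i = q.2 ⟨i.1, Nat.lt_trans i.isLt hlt⟩) ∧
    (¬ ∃ hlt : q.1 < p.1, ∀ i : Fin q.1, q.2 i = p.2 ⟨i.1, Nat.lt_trans i.isLt hlt⟩) :=
  stmt13_general r s K H hHdef p q hp hq
end
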